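/- arXiv:2104.11955 — 2 statements merged into one kernel-verified Lean document; each statement's English description precedes it below -/
import Mathlib

section
/- Let Φ be a first-order L-sentence. If Φ has a finite strong surjective spoiler, then Φ has a finite monomerge spoiler. Consequently, whenever Φ has any finite spoiler, Φ has a finite injective spoiler or a finite monomerge spoiler. -/
open FirstOrder FirstOrder.Language

universe u v w

/-- A homomorphism of `L`-structures is *strong* if it both preserves and reflects all
relations. -/
def IsStrongHom {L : FirstOrder.Language.{v, w}} {M : Type*} {N : Type*}
    [L.Structure M] [L.Structure N] (h : M →[L] N) : Prop :=
  ∀ ⦃n : ℕ⦄ (r : L.Relations n) (x : Fin n → M),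
    Structure.RelMap r (⇑h ∘ x) ↔ Structure.RelMap r x

/-- A *monomerge* is a strong surjective homomorphism such that exactly one element of the
codomain has a two-element preimage and every other element has a one-element preimage. -/
def IsMonomerge {L : FirstOrder.Language.{v, w}} {M : Type*} {N : Type*}
    [L.Structure M] [L.Structure N] (h : M →[L] N) : Prop :=
  IsStrongHom h ∧ Function.Surjective h ∧
    ∃ b : N, (⇑h ⁻¹' {b}).ncard = 2 ∧ ∀ b' : N, b' ≠ b → (⇑h ⁻¹' {b'}).ncard = 1

/-- `Φ` has a finite spoiler: a homomorphism from a finite model of `Φ` to a finite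
non-model of `Φ`. -/
def HasFiniteSpoiler.{u', v', w'} (L : FirstOrder.Language.{v', w'}) (Φ : L.Sentence) :
    Prop :=
  ∃ (A : Type u') (_ : L.Structure A) (_ : Nonempty A) (_ : Finite A)
    (B : Type u') (_ : L.Structure B) (_ : Nonempty B) (_ : Finite B),
    A ⊨ Φ ∧ ¬ B ⊨ Φ ∧ Nonempty (A →[L] B)

/-- `Φ` has a finite injective spoiler. -/
def HasFiniteInjectiveSpoiler.{u', v', w'} (L : FirstOrder.Language.{v', w'})
    (Φ : L.Sentence) : Prop :=
  ∃ (A : Type u') (_ : L.Structure A) (_ : Nonempty A) (_ : Finite A)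
    (B : Type u') (_ : L.Structure B) (_ : Nonempty B) (_ : Finite B),
    A ⊨ Φ ∧ ¬ B ⊨ Φ ∧ ∃ h : A →[L] B, Function.Injective h

/-- `Φ` has a finite strong surjective spoiler. -/
def HasFiniteStrongSurjectiveSpoiler.{u', v', w'} (L : FirstOrder.Language.{v', w'})
    (Φ : L.Sentence) : Prop :=
  ∃ (A : Type u') (_ : L.Structure A) (_ : Nonempty A) (_ : Finite A)
    (B : Type u') (_ : L.Structure B) (_ : Nonempty B) (_ : Finite B),
    A ⊨ Φ ∧ ¬ B ⊨ Φ ∧ ∃ h : A →[L] B, IsStrongHom h ∧ Function.Surjective h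

/-- `Φ` has a finite monomerge spoiler. -/
def HasFiniteMonomergeSpoiler.{u', v', w'} (L : FirstOrder.Language.{v', w'})
    (Φ : L.Sentence) : Prop :=
  ∃ (A : Type u') (_ : L.Structure A) (_ : Nonempty A) (_ : Finite A)
    (B : Type u') (_ : L.Structure B) (_ : Nonempty B) (_ : Finite B),
    A ⊨ Φ ∧ ¬ B ⊨ Φ ∧ ∃ h : A →[L] B, IsMonomerge h

/-!
A strong surjective spoiler `h : 𝔄 → 𝔅` cannot be injective, since it would then be an
isomorphism. So it identifies two points `a₁ ≠ a₂`, and because `L` has no function symbols of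
positive arity, merging just these two points factors `h` through strong surjections
`𝔄 → 𝔄/(a₁ ∼ a₂) → 𝔅`. If the merged structure still satisfies `Φ`, recurse on it (it is
smaller); otherwise the merge itself is a monomerge spoiler.

An arbitrary spoiler `h` factors as `𝔄 → 𝔄_h → h(𝔄) → 𝔅`, where `𝔄_h` is `𝔄` with the relations
pulled back along `h`. The outer maps are injective and the middle one is strong surjective, so
the first place along the chain where `Φ` fails is an injective or a strong surjective spoiler.
-/

open Function Structure

variable {L : FirstOrder.Language.{v, w}} {M N : Type*} [L.Structure M] [L.Structure N]

namespace IsStrongHom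

variable {h : M →[L] N}

theorem relMap_comp_iff (hs : IsStrongHom h) {g : M → M} (hg : ∀ x, h (g x) = h x) {n : ℕ}
    (r : L.Relations n) (x : Fin n → M) : RelMap r (g ∘ x) ↔ RelMap r x := by
  rw [← hs r (g ∘ x), ← hs r x, show ⇑h ∘ g ∘ x = ⇑h ∘ x from funext fun i => hg (x i)]

theorem realize_sentence_iff (hs : IsStrongHom h) (hb : Bijective h) (φ : L.Sentence) :
    M ⊨ φ ↔ N ⊨ φ :=
  StrongHomClass.realize_sentence
    ({ toEquiv := Equiv.ofBijective h hb, map_fun' := h.map_fun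
       map_rel' := fun {_} r x => hs r x } : M ≃[L] N) φ

theorem isMonomerge (hs : IsStrongHom h) (hsurj : Surjective h) {a₁ a₂ : M} (hne : a₁ ≠ a₂)
    (heq : h a₁ = h a₂) (hinj : Set.InjOn h {a₁}ᶜ) : IsMonomerge h := by
  refine ⟨hs, hsurj, h a₂, ?_, fun b hb => ?_⟩
  · suffices ⇑h ⁻¹' {h a₂} = {a₁, a₂} by rw [this, Set.ncard_pair hne]
    ext x
    by_cases hx : x = a₁
    · simp [hx, heq]
    · simpa [hx] using hinj.eq_iff hx (Ne.symm hne)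
  · obtain ⟨x, rfl⟩ := hsurj b
    have hx : x ≠ a₁ := by rintro rfl; exact hb heq
    suffices ⇑h ⁻¹' {h x} = {x} by rw [this, Set.ncard_singleton]
    ext y
    have hy : h y = h x → y ≠ a₁ := by rintro hyx rfl; exact hb (hyx.symm.trans heq)
    simpa using ⟨fun hyx => hinj (hy hyx) hx hyx, fun hyx => congrArg h hyx⟩

end IsStrongHom

namespace Setoid

def merge [DecidableEq M] (a₁ a₂ : M) : Setoid M :=
  Setoid.ker (update id a₁ a₂)

variable [DecidableEq M] {a₁ a₂ : M}

theorem merge_rel : merge a₁ a₂ a₁ a₂ := by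
  rw [merge, ker_def, update_self, update_apply]
  split_ifs with h <;> simp [h]

theorem eq_of_merge_rel {x y : M} (hx : x ≠ a₁) (hy : y ≠ a₁) (hxy : merge a₁ a₂ x y) :
    x = y := by
  rwa [merge, ker_def, update_of_ne hx, update_of_ne hy] at hxy

theorem merge_le_ker {f : M → N} (heq : f a₁ = f a₂) : merge a₁ a₂ ≤ ker f := by
  have hf : ∀ x, f (update id a₁ a₂ x) = f x := fun x => by
    by_cases hx : x = a₁ <;> simp [hx, heq]
  intro x y hxy
  rw [merge, ker_def] at hxy
  rw [ker_def, ← hf x, ← hf y, hxy]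

end Setoid

theorem Nat.card_quotient_lt [Finite M] {s : Setoid M} {a₁ a₂ : M} (hne : a₁ ≠ a₂)
    (hrel : s a₁ a₂) : Nat.card (Quotient s) < Nat.card M := by
  by_contra! hle
  exact hne ((Quotient.mk_surjective.bijective_of_nat_card_le hle).1 (Quotient.sound hrel))

namespace FirstOrder.Language

/-- Defined through representatives so that it exists for every `s`; the quotient map is a
homomorphism only when `s` respects the symbols. -/
noncomputable local instance quotientOutStructure (s : Setoid M) : L.Structure (Quotient s) where
  funMap f y := ⟦funMap f (Quotient.out ∘ y)⟧
  RelMap r y := RelMap r (Quotient.out ∘ y)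

variable {s : Setoid M} {h : M →[L] N}

theorem comp_out_eq_lift (hsh : s ≤ Setoid.ker h) :
    (⇑h ∘ Quotient.out : Quotient s → N) = Quotient.lift h hsh :=
  funext fun q => Quotient.inductionOn q fun a => hsh (Quotient.mk_out a)

def quotientLiftHom (h : M →[L] N) (hsh : s ≤ Setoid.ker h) : Quotient s →[L] N where
  toFun := Quotient.lift h hsh
  map_fun' f y := by
    change h (funMap f (Quotient.out ∘ y)) = _
    rw [h.map_fun, ← comp_out_eq_lift hsh]
    rfl
  map_rel' r y hr := by
    rw [← comp_out_eq_lift hsh]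
    exact h.map_rel r _ hr

theorem isStrongHom_quotientLiftHom (hs : IsStrongHom h) (hsh : s ≤ Setoid.ker h) :
    IsStrongHom (quotientLiftHom h hsh) := fun _ r y => by
  change RelMap r (Quotient.lift h hsh ∘ y) ↔ RelMap r (Quotient.out ∘ y)
  rw [← comp_out_eq_lift hsh]
  exact hs r _

theorem quotientLiftHom_surjective (hsurj : Surjective h) (hsh : s ≤ Setoid.ker h) :
    Surjective (quotientLiftHom h hsh) := fun b =>
  let ⟨a, ha⟩ := hsurj b
  ⟨⟦a⟧, ha⟩

def quotientMkHom (hL : ∀ n, IsEmpty (L.Functions (n + 1))) (hs : IsStrongHom h)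
    (hsh : s ≤ Setoid.ker h) : M →[L] Quotient s where
  toFun := Quotient.mk s
  map_fun' {n} f x := by
    cases n with
    | zero => exact congrArg (fun x => ⟦funMap f x⟧) (Subsingleton.elim _ _)
    | succ n => exact (hL n).elim f
  map_rel' r x :=
    (hs.relMap_comp_iff (g := Quotient.out ∘ Quotient.mk s)
      (fun a => hsh (Quotient.mk_out a)) r x).2

theorem isStrongHom_quotientMkHom (hL : ∀ n, IsEmpty (L.Functions (n + 1)))
    (hs : IsStrongHom h) (hsh : s ≤ Setoid.ker h) : IsStrongHom (quotientMkHom hL hs hsh) :=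
  fun _ r x => hs.relMap_comp_iff (g := Quotient.out ∘ Quotient.mk s)
    (fun a => hsh (Quotient.mk_out a)) r x

theorem isMonomerge_quotientMkHom_merge [DecidableEq M]
    (hL : ∀ n, IsEmpty (L.Functions (n + 1))) (hs : IsStrongHom h) {a₁ a₂ : M}
    (hne : a₁ ≠ a₂) (heq : h a₁ = h a₂) :
    IsMonomerge (quotientMkHom hL hs (Setoid.merge_le_ker heq)) :=
  (isStrongHom_quotientMkHom hL hs _).isMonomerge Quotient.mk_surjective hne
    (Quotient.sound Setoid.merge_rel)
    fun _ hx _ hy hxy => Setoid.eq_of_merge_rel hx hy (Quotient.exact hxy)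

namespace Hom

/-- `M` with its own function symbols but with the relations of `N` pulled back along `h`. -/
def RelComap (_h : M →[L] N) : Type _ := M

variable (h : M →[L] N)

instance : L.Structure h.RelComap where
  funMap f x := funMap (M := M) f x
  RelMap r x := RelMap r (h ∘ x)

instance [Nonempty M] : Nonempty h.RelComap := ‹Nonempty M›

instance [Finite M] : Finite h.RelComap := ‹Finite M›

def toRelComap : M →[L] h.RelComap where
  toFun := _root_.id
  map_rel' r x := h.map_rel r x

def fromRelComap : h.RelComap →[L] N where
  toFun := h
  map_fun' f x := h.map_fun f x
  map_rel' _ _ := _root_.id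

theorem isStrongHom_fromRelComap : IsStrongHom h.fromRelComap := fun _ _ _ => Iff.rfl

theorem isStrongHom_codRestrict_range {h : M →[L] N} (hs : IsStrongHom h) :
    IsStrongHom (h.codRestrict h.range h.mem_range_self) := fun _ r x => hs r x

theorem codRestrict_range_surjective : Surjective (h.codRestrict h.range h.mem_range_self) := by
  rintro ⟨_, a, rfl⟩
  exact ⟨a, rfl⟩

end Hom

theorem hasFiniteMonomergeSpoiler_of_isStrongHom (hL : ∀ n, IsEmpty (L.Functions (n + 1)))
    {Φ : L.Sentence} {A B : Type u} [L.Structure A] [L.Structure B] [Nonempty A] [Finite A]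
    (hA : A ⊨ Φ) (hB : ¬ B ⊨ Φ) {h : A →[L] B} (hs : IsStrongHom h) (hsurj : Surjective h) :
    HasFiniteMonomergeSpoiler.{u, v, w} L Φ := by
  classical
  obtain ⟨a₁, a₂, heq, hne⟩ : ∃ a₁ a₂, h a₁ = h a₂ ∧ a₁ ≠ a₂ := by
    by_contra! hinj
    exact hB ((hs.realize_sentence_iff ⟨fun a₁ a₂ => hinj a₁ a₂, hsurj⟩ Φ).1 hA)
  have hsh := Setoid.merge_le_ker heq
  have : Nonempty (Quotient (Setoid.merge a₁ a₂)) := ⟨⟦a₁⟧⟩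
  have hcard := Nat.card_quotient_lt hne (Setoid.merge_rel (a₁ := a₁) (a₂ := a₂))
  by_cases hA' : Quotient (Setoid.merge a₁ a₂) ⊨ Φ
  · exact hasFiniteMonomergeSpoiler_of_isStrongHom hL hA' hB (isStrongHom_quotientLiftHom hs hsh)
      (quotientLiftHom_surjective hsurj hsh)
  · exact ⟨A, _, inferInstance, inferInstance, Quotient (Setoid.merge a₁ a₂), _, inferInstance,
      inferInstance, hA, hA', _, isMonomerge_quotientMkHom_merge hL hs hne heq⟩
termination_by Nat.card A
decreasing_by exact hcard

theorem hasFiniteInjectiveSpoiler_or_hasFiniteStrongSurjectiveSpoiler_of_isStrongHom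
    {Φ : L.Sentence} {A B : Type u} [L.Structure A] [L.Structure B] [Nonempty A] [Finite A]
    [Nonempty B] [Finite B] (hA : A ⊨ Φ) (hB : ¬ B ⊨ Φ) {h : A →[L] B} (hs : IsStrongHom h) :
    HasFiniteInjectiveSpoiler.{u, v, w} L Φ ∨ HasFiniteStrongSurjectiveSpoiler.{u, v, w} L Φ := by
  have : Nonempty h.range := ⟨⟨h (Classical.arbitrary A), h.mem_range_self _⟩⟩
  by_cases hC : h.range ⊨ Φ
  · exact Or.inl ⟨h.range, _, inferInstance, inferInstance, B, _, inferInstance, inferInstance,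
      hC, hB, h.range.subtype.toHom, Subtype.val_injective⟩
  · exact Or.inr ⟨A, _, inferInstance, inferInstance, h.range, _, inferInstance, inferInstance,
      hA, hC, _, Hom.isStrongHom_codRestrict_range hs, h.codRestrict_range_surjective⟩

end FirstOrder.Language

theorem HasFiniteStrongSurjectiveSpoiler.hasFiniteMonomergeSpoiler
    (hL : ∀ n, IsEmpty (L.Functions (n + 1))) {Φ : L.Sentence}
    (hΦ : HasFiniteStrongSurjectiveSpoiler.{u, v, w} L Φ) :
    HasFiniteMonomergeSpoiler.{u, v, w} L Φ := by
  obtain ⟨A, _, _, _, B, _, _, _, hA, hB, h, hs, hsurj⟩ := hΦ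
  exact hasFiniteMonomergeSpoiler_of_isStrongHom hL hA hB hs hsurj

theorem HasFiniteSpoiler.hasFiniteInjectiveSpoiler_or_hasFiniteStrongSurjectiveSpoiler
    {Φ : L.Sentence} (hΦ : HasFiniteSpoiler.{u, v, w} L Φ) :
    HasFiniteInjectiveSpoiler.{u, v, w} L Φ ∨ HasFiniteStrongSurjectiveSpoiler.{u, v, w} L Φ := by
  obtain ⟨A, _, _, _, B, _, _, _, hA, hB, ⟨h⟩⟩ := hΦ
  by_cases hA' : h.RelComap ⊨ Φ
  · exact hasFiniteInjectiveSpoiler_or_hasFiniteStrongSurjectiveSpoiler_of_isStrongHom hA' hB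
      h.isStrongHom_fromRelComap
  · exact Or.inl ⟨A, _, inferInstance, inferInstance, h.RelComap, _, inferInstance, inferInstance,
      hA, hA', h.toRelComap, fun _ _ => _root_.id⟩

/-- If a first-order sentence (over a language with only relation and
constant symbols) has a finite strong surjective spoiler, then it has a finite monomerge
spoiler; consequently, if it has any finite spoiler, then it has a finite injective
spoiler or a finite monomerge spoiler. -/
theorem finite_spoiler_monomerge
    (L : FirstOrder.Language.{v, w}) (hL : ∀ n : ℕ, IsEmpty (L.Functions (n + 1)))
    (Φ : L.Sentence) :
    (HasFiniteStrongSurjectiveSpoiler.{u, v, w} L Φ →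
        HasFiniteMonomergeSpoiler.{u, v, w} L Φ) ∧
    (HasFiniteSpoiler.{u, v, w} L Φ →
        HasFiniteInjectiveSpoiler.{u, v, w} L Φ ∨
          HasFiniteMonomergeSpoiler.{u, v, w} L Φ) := by
  have toMonomerge : HasFiniteStrongSurjectiveSpoiler.{u, v, w} L Φ →
      HasFiniteMonomergeSpoiler.{u, v, w} L Φ :=
    HasFiniteStrongSurjectiveSpoiler.hasFiniteMonomergeSpoiler hL
  exact ⟨toMonomerge, fun hΦ =>
    hΦ.hasFiniteInjectiveSpoiler_or_hasFiniteStrongSurjectiveSpoiler.imp_right toMonomerge⟩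
end

section
/- Let D be a set with binary relations H_D, V_D ⊆ D × D. Suppose some FINITE set B with binary relations H_B, V_B satisfies the grid conditions and admits a map g : B → D with H_B(x,y) ⟹ (g x, g y) ∈ H_D and V_B(x,y) ⟹ (g x, g y) ∈ V_D. Then there exists an ultimately periodic D-tiling of ℕ×ℕ: a map t : ℕ×ℕ → D with (t(k,ℓ), t(k+1,ℓ)) ∈ H_D and (t(k,ℓ), t(k,ℓ+1)) ∈ V_D for all k, ℓ, together with k_init, ℓ_init ∈ ℕ and positive k_per, ℓ_per ∈ ℕ such that t(k + k_per, ℓ) = t(k,ℓ) whenever k ≥ k_init and t(k, ℓ + ℓ_per) = t(k,ℓ) whenever ℓ ≥ ℓ_init. -/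
/-! Pick successor maps `right, up : B → B` with `H x (right x)` and `V x (up x)`, and tile
`ℕ × ℕ` by `(k, ℓ) ↦ up^[ℓ] (right^[k] x₀)`. Columns are `V`-chains by construction; rows are
`H`-chains because the square condition carries `H x y` to `H (up x) (up y)`. Since `B` is finite,
the iterates of `right` and of `up` are eventually periodic, which makes the tiling ultimately
periodic in both directions, and composing with the homomorphism `g` moves it to `D`. -/

theorem Function.exists_iterate_add_eq_iterate_of_finite {α : Type*} [Finite α] (f : α → α) :
    ∃ m n : ℕ, 0 < n ∧ ∀ ℓ, m ≤ ℓ → f^[ℓ + n] = f^[ℓ] := by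
  obtain ⟨i, j, hne, hij⟩ := Finite.exists_ne_map_eq_of_infinite fun k : ℕ => f^[k]
  wlog hlt : i < j generalizing i j
  · exact this j i hne.symm hij.symm (hne.symm.lt_of_le (not_lt.mp hlt))
  refine ⟨i, j - i, Nat.sub_pos_of_lt hlt, fun ℓ hℓ => ?_⟩
  calc f^[ℓ + (j - i)] = f^[ℓ - i] ∘ f^[j] := by rw [← Function.iterate_add]; congr 1; omega
    _ = f^[ℓ - i] ∘ f^[i] := by rw [hij]
    _ = f^[ℓ] := by rw [← Function.iterate_add]; congr 1; omega

section Tiling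

variable {α β : Type*}

def IsUltimatelyPeriodicTiling (H V : α → α → Prop) (t : ℕ × ℕ → α) : Prop :=
  ∃ kinit ℓinit kper ℓper : ℕ,
    0 < kper ∧ 0 < ℓper ∧
    (∀ k ℓ : ℕ, H (t (k, ℓ)) (t (k + 1, ℓ))) ∧
    (∀ k ℓ : ℕ, V (t (k, ℓ)) (t (k, ℓ + 1))) ∧
    (∀ k ℓ : ℕ, kinit ≤ k → t (k + kper, ℓ) = t (k, ℓ)) ∧
    (∀ k ℓ : ℕ, ℓinit ≤ ℓ → t (k, ℓ + ℓper) = t (k, ℓ))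

theorem IsUltimatelyPeriodicTiling.comp {Hα Vα : α → α → Prop} {Hβ Vβ : β → β → Prop}
    {t : ℕ × ℕ → α} (ht : IsUltimatelyPeriodicTiling Hα Vα t) {g : α → β}
    (hgH : ∀ x y, Hα x y → Hβ (g x) (g y)) (hgV : ∀ x y, Vα x y → Vβ (g x) (g y)) :
    IsUltimatelyPeriodicTiling Hβ Vβ (g ∘ t) := by
  obtain ⟨kinit, ℓinit, kper, ℓper, hkper, hℓper, hH, hV, hk, hℓ⟩ := ht
  refine ⟨kinit, ℓinit, kper, ℓper, hkper, hℓper, fun k ℓ => hgH _ _ (hH k ℓ),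
    fun k ℓ => hgV _ _ (hV k ℓ), fun k ℓ hkk => ?_, fun k ℓ hℓℓ => ?_⟩
  · simp only [Function.comp_apply, hk k ℓ hkk]
  · simp only [Function.comp_apply, hℓ k ℓ hℓℓ]

end Tiling

structure IsGridlike {B : Type*} (H V : B → B → Prop) : Prop where
  exists_right : ∀ x, ∃ y, H x y
  exists_up : ∀ x, ∃ y, V x y
  square : ∀ x y z w, H x y → V x z → V y w → H z w

namespace IsGridlike

variable {B : Type*} {H V : B → B → Prop} (hB : IsGridlike H V)

noncomputable def right (x : B) : B := (hB.exists_right x).choose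

noncomputable def up (x : B) : B := (hB.exists_up x).choose

theorem rel_right (x : B) : H x (hB.right x) := (hB.exists_right x).choose_spec

theorem rel_up (x : B) : V x (hB.up x) := (hB.exists_up x).choose_spec

theorem rel_up_iterate {x y : B} (hxy : H x y) (ℓ : ℕ) : H (hB.up^[ℓ] x) (hB.up^[ℓ] y) := by
  induction ℓ with
  | zero => exact hxy
  | succ ℓ ih =>
    rw [Function.iterate_succ_apply', Function.iterate_succ_apply']
    exact hB.square _ _ _ _ ih (hB.rel_up _) (hB.rel_up _)

noncomputable def tiling (x₀ : B) (p : ℕ × ℕ) : B := hB.up^[p.2] (hB.right^[p.1] x₀)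

theorem isUltimatelyPeriodicTiling_tiling [Finite B] (x₀ : B) :
    IsUltimatelyPeriodicTiling H V (hB.tiling x₀) := by
  obtain ⟨kinit, kper, hkper, hk⟩ := Function.exists_iterate_add_eq_iterate_of_finite hB.right
  obtain ⟨ℓinit, ℓper, hℓper, hℓ⟩ := Function.exists_iterate_add_eq_iterate_of_finite hB.up
  refine ⟨kinit, ℓinit, kper, ℓper, hkper, hℓper, fun k ℓ => ?_, fun k ℓ => ?_,
    fun k ℓ hkk => ?_, fun k ℓ hℓℓ => ?_⟩
  · refine hB.rel_up_iterate ?_ ℓ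
    rw [Function.iterate_succ_apply']
    exact hB.rel_right _
  · simp only [tiling, Function.iterate_succ_apply']
    exact hB.rel_up _
  · simp only [tiling, hk k hkk]
  · simp only [tiling, hℓ ℓ hℓℓ]

end IsGridlike

/-- If some FINITE nonempty structure `(B, H_B, V_B)` satisfies the grid
conditions and maps homomorphically into a domino system `(D, H_D, V_D)`, then there is an
ultimately periodic `D`-tiling of `ℕ × ℕ`. -/
theorem ultimately_periodic_tiling_of_hom_from_finite_gridlike_structure {D B : Type*}
    (HD VD : D → D → Prop) (HB VB : B → B → Prop) [Nonempty B] [Finite B]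
    (h1 : ∀ x : B, ∃ y, HB x y) (h2 : ∀ x : B, ∃ y, VB x y)
    (h3 : ∀ x y z v : B, HB x y → VB x z → VB y v → HB z v)
    (g : B → D)
    (hg1 : ∀ x y : B, HB x y → HD (g x) (g y))
    (hg2 : ∀ x y : B, VB x y → VD (g x) (g y)) :
    ∃ (t : ℕ × ℕ → D) (kinit ℓinit kper ℓper : ℕ),
      0 < kper ∧ 0 < ℓper ∧
      (∀ k ℓ : ℕ, HD (t (k, ℓ)) (t (k + 1, ℓ))) ∧
      (∀ k ℓ : ℕ, VD (t (k, ℓ)) (t (k, ℓ + 1))) ∧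
      (∀ k ℓ : ℕ, kinit ≤ k → t (k + kper, ℓ) = t (k, ℓ)) ∧
      (∀ k ℓ : ℕ, ℓinit ≤ ℓ → t (k, ℓ + ℓper) = t (k, ℓ)) := by
  have hB : IsGridlike HB VB := ⟨h1, h2, h3⟩
  obtain ⟨x₀⟩ := ‹Nonempty B›
  exact ⟨g ∘ hB.tiling x₀, (hB.isUltimatelyPeriodicTiling_tiling x₀).comp hg1 hg2⟩
end
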